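/- Let 𝒜_{(q₀,r)} = (Q,{a,b},δ) be an n-state synchronizing almost permutation automaton with sink state q₀ and pre-sink state r, and let k be a positive multiple of the order of the letter a. Then the reset threshold of the tail extension satisfies rt(𝒜_{(q₀,r)}(k,r)) = rt(𝒜_{(q₀,r)}) + n·k. -/

import Mathlib

/-- The two letters of a binary alphabet. -/
inductive Letter where
  | a : Letter
  | b : Letter
deriving DecidableEq

/-- Extension of a transition function `δ : Q → Letter → Q` to words
(lists of letters), acting on the left: `δ(q, uv) = δ(δ(q, u), v)`. -/
def deltaStar {Q : Type*} (δ : Q → Letter → Q) (q : Q) (w : List Letter) : Q :=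
  w.foldl δ q

/-- `w` is a reset word for the automaton with transition function `δ`. -/
def IsResetWord {Q : Type*} (δ : Q → Letter → Q) (w : List Letter) : Prop :=
  ∀ p q : Q, deltaStar δ p w = deltaStar δ q w

/-- The reset threshold: the minimum length of a reset word. -/
noncomputable def resetThreshold {Q : Type*} (δ : Q → Letter → Q) : ℕ :=
  sInf {l : ℕ | ∃ w : List Letter, IsResetWord δ w ∧ w.length = l}

/-- The tail extension `𝒜(k, r)` of a binary DFA `𝒜 = (Q, {a,b}, δ)` with sink
state `q0`: the state set is `Q ⊕ Fin k` with `Sum.inr i` playing the role of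
the tail state `tᵢ`, and
`δ'(s,a) = δ(s,a)` for `s ∈ Q \ {q0}`, `δ'(q0,a) = t_{k-1}`, `δ'(t0,a) = t0`,
`δ'(tᵢ,a) = t_{i-1}` for `1 ≤ i ≤ k-1`; `δ'(s,b) = δ(s,b)` for `s ∈ Q \ {q0}`,
`δ'(t0,b) = t0`, and `δ'(s,b) = r` for `s ∈ {q0, t1, …, t_{k-1}}`. -/
def tailExt {Q : Type*} [DecidableEq Q] (δ : Q → Letter → Q) (q0 r : Q)
    (k : ℕ) (hk : 0 < k) : Q ⊕ Fin k → Letter → Q ⊕ Fin k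
  | Sum.inl s, Letter.a =>
      if s = q0 then Sum.inr ⟨k - 1, Nat.sub_lt hk Nat.one_pos⟩
      else Sum.inl (δ s Letter.a)
  | Sum.inl s, Letter.b =>
      if s = q0 then Sum.inl r else Sum.inl (δ s Letter.b)
  | Sum.inr i, Letter.a =>
      if (i : ℕ) = 0 then Sum.inr i
      else Sum.inr ⟨(i : ℕ) - 1, Nat.lt_of_le_of_lt (Nat.sub_le _ _) i.isLt⟩
  | Sum.inr i, Letter.b =>
      if (i : ℕ) = 0 then Sum.inr i else Sum.inl r

set_option linter.unusedSectionVars false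

@[simp] lemma deltaStar_nil {Q : Type*} (δ : Q → Letter → Q) (q : Q) :
    deltaStar δ q [] = q := rfl

@[simp] lemma deltaStar_cons {Q : Type*} (δ : Q → Letter → Q) (q : Q) (l : Letter)
    (w : List Letter) :
    deltaStar δ q (l :: w) = deltaStar δ (δ q l) w := rfl

lemma deltaStar_append {Q : Type*} (δ : Q → Letter → Q) (q : Q) (u v : List Letter) :
    deltaStar δ q (u ++ v) = deltaStar δ (deltaStar δ q u) v :=
  List.foldl_append

section Aux

variable {Q : Type*} [DecidableEq Q] (δ : Q → Letter → Q) (q0 r : Q) (k : ℕ) (hk : 0 < k)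

lemma tailExt_inl_a (s : Q) :
    tailExt δ q0 r k hk (Sum.inl s) Letter.a =
      if s = q0 then Sum.inr ⟨k - 1, Nat.sub_lt hk Nat.one_pos⟩
      else Sum.inl (δ s Letter.a) := rfl

lemma tailExt_inl_b (s : Q) :
    tailExt δ q0 r k hk (Sum.inl s) Letter.b =
      if s = q0 then Sum.inl r else Sum.inl (δ s Letter.b) := rfl

lemma tailExt_inl_a_ne (s : Q) (h : s ≠ q0) :
    tailExt δ q0 r k hk (Sum.inl s) Letter.a = Sum.inl (δ s Letter.a) := by
  rw [tailExt_inl_a, if_neg h]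

lemma tailExt_inl_b_ne (s : Q) (h : s ≠ q0) :
    tailExt δ q0 r k hk (Sum.inl s) Letter.b = Sum.inl (δ s Letter.b) := by
  rw [tailExt_inl_b, if_neg h]

lemma tailExt_inl_ne (s : Q) (h : s ≠ q0) (l : Letter) :
    tailExt δ q0 r k hk (Sum.inl s) l = Sum.inl (δ s l) := by
  cases l
  · exact tailExt_inl_a_ne δ q0 r k hk s h
  · exact tailExt_inl_b_ne δ q0 r k hk s h

lemma tailExt_q0_a :
    tailExt δ q0 r k hk (Sum.inl q0) Letter.a =
      Sum.inr ⟨k - 1, Nat.sub_lt hk Nat.one_pos⟩ := by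
  rw [tailExt_inl_a, if_pos rfl]

lemma tailExt_q0_b :
    tailExt δ q0 r k hk (Sum.inl q0) Letter.b = Sum.inl r := by
  rw [tailExt_inl_b, if_pos rfl]

/-- The letter `a` sends the tail state `tᵢ` to `t_{i-1}` (with truncated
subtraction, so `t₀` is fixed). -/
lemma tailExt_inr_a (i : Fin k) :
    tailExt δ q0 r k hk (Sum.inr i) Letter.a =
      Sum.inr ⟨(i : ℕ) - 1, Nat.lt_of_le_of_lt (Nat.sub_le _ _) i.isLt⟩ := by
  show (if (i : ℕ) = 0 then (Sum.inr i : Q ⊕ Fin k) else _) = _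
  split
  · next h => exact congrArg Sum.inr (Fin.ext (by simp [h]))
  · rfl

lemma tailExt_inr_b (i : Fin k) :
    tailExt δ q0 r k hk (Sum.inr i) Letter.b =
      if (i : ℕ) = 0 then Sum.inr i else Sum.inl r := rfl

/-- `t₀` is a sink state of the tail extension. -/
lemma tailExt_t0 (l : Letter) :
    tailExt δ q0 r k hk (Sum.inr ⟨0, hk⟩) l = Sum.inr ⟨0, hk⟩ := by
  cases l
  · rw [tailExt_inr_a]; exact congrArg Sum.inr (Fin.ext rfl)
  · rw [tailExt_inr_b, if_pos rfl]

lemma deltaStar_tailExt_t0 (w : List Letter) :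
    deltaStar (tailExt δ q0 r k hk) (Sum.inr ⟨0, hk⟩) w = Sum.inr ⟨0, hk⟩ := by
  induction w with
  | nil => rfl
  | cons l t ih => rw [deltaStar_cons, tailExt_t0, ih]

/-- descent in the tail under `a`'s -/
lemma deltaStar_tailExt_inr (j : ℕ) (i : Fin k) :
    deltaStar (tailExt δ q0 r k hk) (Sum.inr i) (List.replicate j Letter.a) =
      Sum.inr ⟨(i : ℕ) - j, Nat.lt_of_le_of_lt (Nat.sub_le _ _) i.isLt⟩ := by
  induction j generalizing i with
  | zero => exact congrArg Sum.inr (Fin.ext rfl)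
  | succ j ih =>
      rw [List.replicate_succ, deltaStar_cons, tailExt_inr_a, ih]
      exact congrArg Sum.inr (Fin.ext (by simp; omega))

end Aux

section Aux2

variable {Q : Type*} [DecidableEq Q] {δ : Q → Letter → Q} {q0 r : Q} {k : ℕ} (hk : 0 < k)
variable (hsink : ∀ ℓ : Letter, δ q0 ℓ = q0)

include hsink in
lemma deltaStar_sink (w : List Letter) : deltaStar δ q0 w = q0 := by
  induction w with
  | nil => rfl
  | cons l t ih => rw [deltaStar_cons, hsink, ih]

variable (ha : Function.Bijective fun s => δ s Letter.a)

include hsink ha in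
/-- `a` maps non-sink states to non-sink states. -/
lemma a_ne_q0 {s : Q} (h : s ≠ q0) : δ s Letter.a ≠ q0 := fun hc => by
  exact h (ha.injective (show δ s Letter.a = δ q0 Letter.a by rw [hc, hsink]))

variable {ord : ℕ} (hordid : ∀ q : Q, deltaStar δ q (List.replicate ord Letter.a) = q)

include hordid in
/-- `a^k` is the identity on `Q` whenever `k` is a multiple of `ord`. -/
lemma deltaStar_replicate_mul (m : ℕ) (q : Q) :
    deltaStar δ q (List.replicate (m * ord) Letter.a) = q := by
  induction m generalizing q with
  | zero => simp [deltaStar]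
  | succ m ih =>
      have : (m + 1) * ord = ord + m * ord := by ring
      rw [this, List.replicate_add, deltaStar_append, hordid, ih]

end Aux2

section Upper

variable {Q : Type*} [Fintype Q] [DecidableEq Q] (δ : Q → Letter → Q) (q0 r : Q)
  (k : ℕ) (hk : 0 < k)

/-- Given a reset word `w` for `𝒜`, build a reset word for the tail extension
by inserting a block `a^k` after every letter that brings a fresh state to the
sink `q0`.  The parameter `f` tracks the current position of every state. -/
def buildWord : (Q → Q) → List Letter → List Letter
  | _, [] => []
  | f, l :: t =>
      if ∃ q, f q ≠ q0 ∧ δ (f q) l = q0 then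
        l :: (List.replicate k Letter.a ++ buildWord (fun q => δ (f q) l) t)
      else l :: buildWord (fun q => δ (f q) l) t

variable {δ} {q0} {k}
variable (hsink : ∀ ℓ : Letter, δ q0 ℓ = q0) (ha : Function.Bijective fun s => δ s Letter.a)
  (hak : ∀ q : Q, deltaStar δ q (List.replicate k Letter.a) = q)

include hsink ha in
lemma deltaStar_tailExt_inl_replicate (j : ℕ) {s : Q} (h : s ≠ q0) :
    deltaStar (tailExt δ q0 r k hk) (Sum.inl s) (List.replicate j Letter.a) =
      Sum.inl (deltaStar δ s (List.replicate j Letter.a)) := by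
  induction j generalizing s with
  | zero => rfl
  | succ j ih =>
      rw [List.replicate_succ, deltaStar_cons, deltaStar_cons,
        tailExt_inl_a_ne _ _ _ _ _ _ h, ih (a_ne_q0 hsink ha h)]

include hsink ha hak in
/-- `a^k` fixes every non-sink state of `Q` inside the tail extension. -/
lemma deltaStar_tailExt_inl_ak {s : Q} (h : s ≠ q0) :
    deltaStar (tailExt δ q0 r k hk) (Sum.inl s) (List.replicate k Letter.a) =
      Sum.inl s := by
  rw [deltaStar_tailExt_inl_replicate r hk hsink ha _ h, hak]

/-- `a^k` sends `q0` to the tail sink `t₀` in the tail extension. -/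
lemma deltaStar_tailExt_q0_ak :
    deltaStar (tailExt δ q0 r k hk) (Sum.inl q0) (List.replicate k Letter.a) =
      Sum.inr ⟨0, hk⟩ := by
  obtain ⟨k', rfl⟩ : ∃ k', k = k' + 1 := ⟨k - 1, (Nat.succ_pred_eq_of_pos hk).symm⟩
  rw [List.replicate_succ, deltaStar_cons, tailExt_q0_a, deltaStar_tailExt_inr]
  exact congrArg Sum.inr (Fin.ext (by simp))

/-- `a^k` sends every tail state to `t₀`. -/
lemma deltaStar_tailExt_inr_ak (i : Fin k) :
    deltaStar (tailExt δ q0 r k hk) (Sum.inr i) (List.replicate k Letter.a) =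
      Sum.inr ⟨0, hk⟩ := by
  rw [deltaStar_tailExt_inr]
  exact congrArg Sum.inr (Fin.ext (Nat.sub_eq_zero_of_le i.isLt.le))

include hsink in
lemma buildWord_length (t : List Letter) :
    ∀ f : Q → Q,
      (buildWord δ q0 k f t).length
          + k * (Finset.univ.filter fun q => f q = q0).card ≤
        t.length + k * (Finset.univ.filter fun q => deltaStar δ (f q) t = q0).card := by
  induction t with
  | nil => intro f; simp [buildWord]; exact le_refl _
  | cons l t ih =>
      intro f
      have hsub : (Finset.univ.filter fun q => f q = q0) ⊆
          (Finset.univ.filter fun q => δ (f q) l = q0) := by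
        intro q hq
        simp only [Finset.mem_filter, Finset.mem_univ, true_and] at hq ⊢
        rw [hq, hsink]
      have ihl := ih (fun q => δ (f q) l)
      rw [buildWord]
      split
      · next hex =>
          obtain ⟨q, hq1, hq2⟩ := hex
          have hlt : (Finset.univ.filter fun q => f q = q0).card <
              (Finset.univ.filter fun q => δ (f q) l = q0).card := by
            apply Finset.card_lt_card
            refine ⟨hsub, fun hs => hq1 ?_⟩
            have := hs (Finset.mem_filter.mpr ⟨Finset.mem_univ q, hq2⟩)
            simpa using this
          have h2 := Nat.mul_le_mul_left k hlt
          rw [Nat.mul_succ] at h2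
          simp only [List.length_cons, List.length_append, List.length_replicate,
            deltaStar_cons]
          change _ ≤ _ + k * (Finset.univ.filter fun q => deltaStar δ (δ (f q) l) t = q0).card
          omega
      · have h2 := Nat.mul_le_mul_left k (Finset.card_le_card hsub)
        simp only [List.length_cons, deltaStar_cons]
        change _ ≤ _ + k * (Finset.univ.filter fun q => deltaStar δ (δ (f q) l) t = q0).card
        omega

include hsink ha hak in
lemma buildWord_spec (t : List Letter) :
    ∀ (f : Q → Q) (q : Q),
      deltaStar (tailExt δ q0 r k hk)
          (if f q = q0 then Sum.inr ⟨0, hk⟩ else Sum.inl (f q))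
          (buildWord δ q0 k f t) =
        if deltaStar δ (f q) t = q0 then Sum.inr ⟨0, hk⟩
        else Sum.inl (deltaStar δ (f q) t) := by
  induction t with
  | nil => intro f q; rfl
  | cons l t ih =>
      intro f q
      have h1 : tailExt δ q0 r k hk
          (if f q = q0 then Sum.inr ⟨0, hk⟩ else Sum.inl (f q)) l =
          (if f q = q0 then Sum.inr ⟨0, hk⟩ else Sum.inl (δ (f q) l)) := by
        by_cases h0 : f q = q0
        · rw [if_pos h0, if_pos h0, tailExt_t0]
        · rw [if_neg h0, if_neg h0, tailExt_inl_ne _ _ _ _ _ _ h0]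
      have h2 : deltaStar (tailExt δ q0 r k hk)
          (if f q = q0 then Sum.inr ⟨0, hk⟩ else Sum.inl (δ (f q) l))
          (List.replicate k Letter.a) =
          (if δ (f q) l = q0 then Sum.inr ⟨0, hk⟩ else Sum.inl (δ (f q) l)) := by
        by_cases h0 : f q = q0
        · rw [if_pos h0, if_pos (show δ (f q) l = q0 by rw [h0, hsink])]
          exact deltaStar_tailExt_t0 _ _ _ _ _ _
        · rw [if_neg h0]
          by_cases h1' : δ (f q) l = q0
          · rw [if_pos h1', h1']; exact deltaStar_tailExt_q0_ak r hk
          · rw [if_neg h1']; exact deltaStar_tailExt_inl_ak r hk hsink ha hak h1'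
      rw [buildWord]
      by_cases hex : ∃ q, f q ≠ q0 ∧ δ (f q) l = q0
      · rw [if_pos hex, deltaStar_cons, h1, deltaStar_append, h2]
        exact ih (fun q => δ (f q) l) q
      · rw [if_neg hex, deltaStar_cons, h1]
        have h3 : (if f q = q0 then (Sum.inr ⟨0, hk⟩ : Q ⊕ Fin k)
            else Sum.inl (δ (f q) l)) =
            (if δ (f q) l = q0 then Sum.inr ⟨0, hk⟩ else Sum.inl (δ (f q) l)) := by
          push_neg at hex
          by_cases h0 : f q = q0
          · rw [if_pos h0, if_pos (show δ (f q) l = q0 by rw [h0, hsink])]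
          · rw [if_neg h0, if_neg (hex q h0)]
        rw [h3]
        exact ih (fun q => δ (f q) l) q

include hsink ha hak in
/-- Upper bound: from a reset word for `𝒜` of length `L` we get a reset word
for the tail extension of length at most `L + k * |Q|`. -/
lemma exists_reset_tailExt {w : List Letter} (hw : IsResetWord δ w) :
    ∃ W : List Letter, IsResetWord (tailExt δ q0 r k hk) W ∧
      W.length ≤ w.length + k * Fintype.card Q := by
  classical
  refine ⟨List.replicate k Letter.a ++ buildWord δ q0 k id w, ?_, ?_⟩
  · have hall : ∀ x : Q ⊕ Fin k,
        deltaStar (tailExt δ q0 r k hk) x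
          (List.replicate k Letter.a ++ buildWord δ q0 k id w) = Sum.inr ⟨0, hk⟩ := by
      intro x
      rw [deltaStar_append]
      cases x with
      | inl q =>
          have hq : deltaStar δ q w = q0 := by
            rw [hw q q0, deltaStar_sink hsink]
          have hstep : deltaStar (tailExt δ q0 r k hk) (Sum.inl q)
              (List.replicate k Letter.a) =
              (if (q : Q) = q0 then Sum.inr ⟨0, hk⟩ else Sum.inl q) := by
            by_cases h : q = q0
            · rw [if_pos h, h]; exact deltaStar_tailExt_q0_ak r hk
            · rw [if_neg h]; exact deltaStar_tailExt_inl_ak r hk hsink ha hak h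
          rw [hstep, show (if (q : Q) = q0 then (Sum.inr ⟨0, hk⟩ : Q ⊕ Fin k)
              else Sum.inl q) =
              (if (id q : Q) = q0 then Sum.inr ⟨0, hk⟩ else Sum.inl (id q)) from rfl,
            buildWord_spec r hk hsink ha hak]
          simp only [id]
          rw [if_pos hq]
      | inr i =>
          rw [deltaStar_tailExt_inr_ak, deltaStar_tailExt_t0]
    intro p q; rw [hall p, hall q]
  · have hlen := buildWord_length (k := k) hsink w id
    have h1 : (Finset.univ.filter fun q : Q => id q = q0).card = 1 := by
      rw [show (Finset.univ.filter fun q : Q => id q = q0) = {q0} by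
        ext q; simp [eq_comm]]
      simp
    have h2 : (Finset.univ.filter fun q : Q => deltaStar δ (id q) w = q0).card =
        Fintype.card Q := by
      rw [show (Finset.univ.filter fun q : Q => deltaStar δ (id q) w = q0) =
          Finset.univ by
        ext q; simp only [Finset.mem_filter, Finset.mem_univ, true_and, iff_true, id]
        rw [hw q q0, deltaStar_sink hsink]]
      simp
    rw [h1, h2] at hlen
    simp only [List.length_append, List.length_replicate]
    omega

end Upper

lemma deltaStar_take_succ {X : Type*} (f : X → Letter → X) (x : X) (W : List Letter)
    (s : ℕ) (h : s < W.length) :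
    deltaStar f x (W.take (s + 1)) = f (deltaStar f x (W.take s)) W[s] := by
  rw [List.take_succ, List.getElem?_eq_getElem h, deltaStar_append]
  rfl

lemma list_take_add {X : Type*} (W : List X) (s j : ℕ) :
    W.take (s + j) = W.take s ++ (W.drop s).take j := by
  rw [List.take_drop]
  conv_lhs => rw [← List.take_append_drop s (W.take (s+j))]
  rw [List.take_take, min_eq_left (by omega)]

lemma deltaStar_take_add {X : Type*} (f : X → Letter → X) (x : X) (W : List Letter)
    (s j : ℕ) :
    deltaStar f x (W.take (s + j)) =
      deltaStar f (deltaStar f x (W.take s)) ((W.drop s).take j) := by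
  rw [list_take_add, deltaStar_append]


section Lower

variable {Q : Type*} [Fintype Q] [DecidableEq Q] {δ : Q → Letter → Q} {q0 r : Q}
  {k : ℕ} (hk : 0 < k)
variable (hsink : ∀ ℓ : Letter, δ q0 ℓ = q0)
  (hrne : r ≠ q0) (hrb : δ r Letter.b = q0)
  (hruniq : ∀ s : Q, s ≠ q0 → δ s Letter.b = q0 → s = r)
  (hb : Set.BijOn (fun s => δ s Letter.b) {r}ᶜ {r}ᶜ)
  (ha : Function.Bijective fun s => δ s Letter.a)
  (hak : ∀ q : Q, deltaStar δ q (List.replicate k Letter.a) = q)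

include hsink ha in
/-- Nothing maps to `inl q0` under the letter `a` in the tail extension. -/
lemma no_a_to_q0 (x : Q ⊕ Fin k) : tailExt δ q0 r k hk x Letter.a ≠ Sum.inl q0 := by
  cases x with
  | inl s =>
      rw [tailExt_inl_a]
      split
      · exact fun h => by simp at h
      · next h => exact fun hc => a_ne_q0 hsink ha h (Sum.inl.inj hc)
  | inr i => rw [tailExt_inr_a]; exact fun h => by simp at h

/-- Under `b`, the only way to land in the tail is to stay at `t₀`. -/
lemma b_to_inr {x : Q ⊕ Fin k} {j : Fin k}
    (h : tailExt δ q0 r k hk x Letter.b = Sum.inr j) : (j : ℕ) = 0 ∧ x = Sum.inr j := by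
  cases x with
  | inl s =>
      rw [tailExt_inl_b] at h
      split at h <;> simp at h
  | inr i =>
      rw [tailExt_inr_b] at h
      split at h
      · next h0 => exact ⟨by rw [← Sum.inr.inj h]; exact h0, by rw [← Sum.inr.inj h]⟩
      · simp at h

include hsink hrne hrb hruniq hb ha in
/-- Classification of the merging transitions of the tail extension: either the
common image is the tail sink `t₀`, or the letter is `b`, the common image is
`inl r`, and both sources lie in `{inl q0} ∪ {t₁, …, t_{k-1}}`. -/
lemma collision {x y : Q ⊕ Fin k} {l : Letter} (hxy : x ≠ y)
    (h : tailExt δ q0 r k hk x l = tailExt δ q0 r k hk y l) :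
    tailExt δ q0 r k hk x l = Sum.inr ⟨0, hk⟩ ∨
      (l = Letter.b ∧ tailExt δ q0 r k hk x l = Sum.inl r ∧
        (x = Sum.inl q0 ∨ ∃ i : Fin k, 1 ≤ (i : ℕ) ∧ x = Sum.inr i) ∧
        (y = Sum.inl q0 ∨ ∃ i : Fin k, 1 ≤ (i : ℕ) ∧ y = Sum.inr i)) := by
  have src : ∀ z : Q ⊕ Fin k, tailExt δ q0 r k hk z Letter.b = Sum.inl r →
      z = Sum.inl q0 ∨ ∃ i : Fin k, 1 ≤ (i : ℕ) ∧ z = Sum.inr i := by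
    intro z hz
    cases z with
    | inl s =>
        rw [tailExt_inl_b] at hz
        split at hz
        · next h0 => exact Or.inl (by rw [h0])
        · next h0 =>
            exfalso
            have hs : δ s Letter.b = r := Sum.inl.inj hz
            by_cases hsr : s = r
            · rw [hsr, hrb] at hs; exact hrne hs.symm
            · exact (hb.mapsTo (show s ∈ ({r}ᶜ : Set Q) from hsr)) hs
    | inr i =>
        rw [tailExt_inr_b] at hz
        split at hz
        · simp at hz
        · next h0 => exact Or.inr ⟨i, by omega, rfl⟩
  cases l with
  | a =>
      left
      cases x with
      | inl s =>
          cases y with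
          | inl s' =>
              exfalso
              rw [tailExt_inl_a, tailExt_inl_a] at h
              by_cases h1 : s = q0 <;> by_cases h2 : s' = q0
              · exact hxy (by rw [h1, h2])
              · rw [if_pos h1, if_neg h2] at h; simp at h
              · rw [if_neg h1, if_pos h2] at h; simp at h
              · rw [if_neg h1, if_neg h2] at h
                exact hxy (congrArg Sum.inl (ha.injective (Sum.inl.inj h)))
          | inr i =>
              rw [tailExt_inl_a, tailExt_inr_a] at h
              by_cases h1 : s = q0
              · rw [if_pos h1] at h
                have hv : k - 1 = (i : ℕ) - 1 := congrArg Fin.val (Sum.inr.inj h)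
                have hi := i.isLt
                rw [tailExt_inl_a, if_pos h1]
                exact congrArg Sum.inr (Fin.ext (by simp; omega))
              · rw [if_neg h1] at h; simp at h
      | inr i =>
          cases y with
          | inl s' =>
              rw [tailExt_inr_a, tailExt_inl_a] at h
              by_cases h1 : s' = q0
              · rw [if_pos h1] at h
                have hv : (i : ℕ) - 1 = k - 1 := congrArg Fin.val (Sum.inr.inj h)
                have hi := i.isLt
                rw [tailExt_inr_a]
                exact congrArg Sum.inr (Fin.ext (by simp; omega))
              · rw [if_neg h1] at h; simp at h
          | inr i' =>
              rw [tailExt_inr_a, tailExt_inr_a] at h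
              have hv : (i : ℕ) - 1 = (i' : ℕ) - 1 := congrArg Fin.val (Sum.inr.inj h)
              have hii : (i : ℕ) ≠ (i' : ℕ) := fun hc => hxy (by
                rw [show i = i' from Fin.ext hc])
              have hi := i.isLt
              have hi' := i'.isLt
              rw [tailExt_inr_a]
              exact congrArg Sum.inr (Fin.ext (by simp; omega))
  | b =>
      right
      have key : tailExt δ q0 r k hk x Letter.b = Sum.inl r := by
        cases x with
        | inl s =>
            cases y with
            | inl s' =>
                exfalso
                rw [tailExt_inl_b, tailExt_inl_b] at h
                by_cases h1 : s = q0 <;> by_cases h2 : s' = q0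
                · exact hxy (by rw [h1, h2])
                · rw [if_pos h1, if_neg h2] at h
                  have h3 : δ s' Letter.b = r := (Sum.inl.inj h).symm
                  by_cases h4 : s' = r
                  · rw [h4, hrb] at h3; exact hrne h3.symm
                  · exact hb.mapsTo (show s' ∈ ({r}ᶜ : Set Q) from h4) h3
                · rw [if_neg h1, if_pos h2] at h
                  have h3 : δ s Letter.b = r := Sum.inl.inj h
                  by_cases h4 : s = r
                  · rw [h4, hrb] at h3; exact hrne h3.symm
                  · exact hb.mapsTo (show s ∈ ({r}ᶜ : Set Q) from h4) h3
                · rw [if_neg h1, if_neg h2] at h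
                  have h3 : δ s Letter.b = δ s' Letter.b := Sum.inl.inj h
                  by_cases h4 : s = r <;> by_cases h5 : s' = r
                  · exact hxy (by rw [h4, h5])
                  · rw [h4, hrb] at h3
                    exact h5 (hruniq s' h2 h3.symm)
                  · rw [h5, hrb] at h3
                    exact h4 (hruniq s h1 h3)
                  · exact hxy (congrArg Sum.inl (hb.injOn h4 h5 h3))
            | inr i =>
                rw [tailExt_inr_b] at h
                split at h
                · exfalso
                  rw [tailExt_inl_b] at h
                  split at h <;> simp at h
                · exact h
        | inr i =>
            by_cases h0 : (i : ℕ) = 0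
            · exfalso
              rw [tailExt_inr_b, if_pos h0] at h
              cases y with
              | inl s' =>
                  rw [tailExt_inl_b] at h
                  split at h <;> simp at h
              | inr i' =>
                  rw [tailExt_inr_b] at h
                  split at h
                  · exact hxy (by rw [Sum.inr.inj h])
                  · simp at h
            · rw [tailExt_inr_b, if_neg h0]
      exact ⟨rfl, key, src x key, src y (h.symm.trans key)⟩

/-- Every trajectory from `Q` that reaches the tail passes through `inl q0`. -/
lemma cross (w : List Letter) :
    ∀ p : Q, (∃ i, deltaStar (tailExt δ q0 r k hk) (Sum.inl p) w = Sum.inr i) →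
      ∃ u v : List Letter, w = u ++ v ∧
        deltaStar (tailExt δ q0 r k hk) (Sum.inl p) u = Sum.inl q0 := by
  induction w with
  | nil => rintro p ⟨i, hi⟩; simp [deltaStar] at hi
  | cons l t ih =>
      rintro p ⟨i, hi⟩
      rw [deltaStar_cons] at hi
      cases hx : tailExt δ q0 r k hk (Sum.inl p) l with
      | inl p' =>
          rw [hx] at hi
          obtain ⟨u, v, huv, hu⟩ := ih p' ⟨i, hi⟩
          exact ⟨l :: u, v, by rw [huv]; rfl, by rw [deltaStar_cons, hx, hu]⟩
      | inr j =>
          have hp : p = q0 := by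
            cases l with
            | a =>
                rw [tailExt_inl_a] at hx
                by_cases h1 : p = q0
                · exact h1
                · rw [if_neg h1] at hx; simp at hx
            | b => rw [tailExt_inl_b] at hx; split at hx <;> simp_all
          exact ⟨[], l :: t, rfl, by simp [deltaStar, hp]⟩

/-- Relation between states of the tail extension and of `𝒜`: the projection of
a tail-extension trajectory is tracked up to having fallen into the sink. -/
def TRel (q0 : Q) {k : ℕ} : Q ⊕ Fin k → Q → Prop
  | Sum.inl s, p => p = s ∨ p = q0
  | Sum.inr _, p => p = q0

lemma TRel_q0 (y : Q ⊕ Fin k) : TRel q0 y q0 := by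
  cases y with
  | inl s => exact Or.inr rfl
  | inr i => exact rfl

include hsink in
lemma TRel_step {x : Q ⊕ Fin k} {p : Q} (l : Letter) (hR : TRel q0 x p) :
    TRel q0 (tailExt δ q0 r k hk x l) (δ p l) := by
  cases x with
  | inl s =>
      rcases hR with rfl | rfl
      · by_cases h0 : p = q0
        · rw [h0, hsink]; exact TRel_q0 _
        · rw [tailExt_inl_ne _ _ _ _ _ _ h0]; exact Or.inl rfl
      · rw [hsink]; exact TRel_q0 _
  | inr i =>
      cases hR; rw [hsink]; exact TRel_q0 _

include hsink in
lemma TRel_star (w : List Letter) :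
    ∀ (x : Q ⊕ Fin k) (p : Q), TRel q0 x p →
      TRel q0 (deltaStar (tailExt δ q0 r k hk) x w) (deltaStar δ p w) := by
  induction w with
  | nil => exact fun x p h => h
  | cons l t ih =>
      intro x p h
      rw [deltaStar_cons, deltaStar_cons]
      exact ih _ _ (TRel_step hk hsink l h)

include hsink in
/-- If the word `w` takes `inl p` to `inl q0` in the tail extension, then in
`𝒜` it takes `p` to the sink `q0`. -/
lemma proj_to_q0 {w : List Letter} {p : Q}
    (h : deltaStar (tailExt δ q0 r k hk) (Sum.inl p) w = Sum.inl q0) :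
    deltaStar δ p w = q0 := by
  have := TRel_star (r := r) hk hsink w (Sum.inl p) p (Or.inl rfl)
  rw [h] at this
  rcases this with h' | h' <;> exact h'

include hak in
/-- Removing a family of pairwise-disjoint `a^k`-blocks from a word does not
change its action on `𝒜`. -/
lemma removeBlocks :
    ∀ (s : Finset ℕ) (W : List Letter),
      (∀ t ∈ s, t + k ≤ W.length ∧
        ∀ j, (hj : j < k) → ∀ h : t + j < W.length, W[t + j] = Letter.a) →
      (∀ t ∈ s, ∀ t' ∈ s, t ≠ t' → t + k ≤ t' ∨ t' + k ≤ t) →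
      ∃ W₁ : List Letter, W₁.length + k * s.card = W.length ∧
        ∀ q : Q, deltaStar δ q W₁ = deltaStar δ q W := by
  intro s
  induction s using Finset.induction_on_max with
  | empty => exact fun W _ _ => ⟨W, by simp, fun q => rfl⟩
  | insert t0 s hmax ih =>
      intro W hblk hdisj
      have ht0 := hblk t0 (Finset.mem_insert_self _ _)
      have ht0k : t0 + k ≤ W.length := ht0.1
      have hmid : (W.drop t0).take k = List.replicate k Letter.a := by
        apply List.ext_getElem
        · simp; omega
        · intro j h1 h2
          have hj : j < k := by simpa using h2
          have h3 : t0 + j < W.length := by omega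
          rw [List.getElem_take, List.getElem_drop, List.getElem_replicate]
          exact ht0.2 j hj h3
      have hdecomp : W = W.take t0 ++ (List.replicate k Letter.a ++ W.drop (t0 + k)) := by
        conv_lhs => rw [← List.take_append_drop t0 W]
        congr 1
        conv_lhs => rw [← List.take_append_drop k (W.drop t0)]
        rw [hmid, List.drop_drop]
      have hlenW' : (W.take t0 ++ W.drop (t0 + k)).length + k = W.length := by
        simp [List.length_take, List.length_drop]
        omega
      have hδ : ∀ q : Q, deltaStar δ q (W.take t0 ++ W.drop (t0 + k)) =
          deltaStar δ q W := by
        intro q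
        conv_rhs => rw [hdecomp]
        rw [deltaStar_append, deltaStar_append, deltaStar_append, hak]
      have hnotmem : t0 ∉ s := fun hc => lt_irrefl t0 (hmax t0 hc)
      have hblk' : ∀ t ∈ s, t + k ≤ (W.take t0 ++ W.drop (t0 + k)).length ∧
          ∀ j, (hj : j < k) → ∀ h : t + j < (W.take t0 ++ W.drop (t0 + k)).length,
            (W.take t0 ++ W.drop (t0 + k))[t + j] = Letter.a := by
        intro t hts
        have htlt : t < t0 := hmax t hts
        have htk : t + k ≤ t0 := by
          rcases hdisj t (Finset.mem_insert_of_mem hts) t0 (Finset.mem_insert_self _ _)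
            (by omega) with h' | h'
          · exact h'
          · omega
        constructor
        · omega
        · intro j hj h
          have hjt0 : t + j < t0 := by omega
          have h1 : t + j < (W.take t0).length := by
            rw [List.length_take]; omega
          rw [List.getElem_append_left h1, List.getElem_take]
          exact (hblk t (Finset.mem_insert_of_mem hts)).2 j hj (by omega)
      have hdisj' : ∀ t ∈ s, ∀ t' ∈ s, t ≠ t' → t + k ≤ t' ∨ t' + k ≤ t :=
        fun t ht t' ht' hne =>
          hdisj t (Finset.mem_insert_of_mem ht) t' (Finset.mem_insert_of_mem ht') hne
      obtain ⟨W₁, hlen₁, hδ₁⟩ := ih (W.take t0 ++ W.drop (t0 + k)) hblk' hdisj'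
      refine ⟨W₁, ?_, fun q => (hδ₁ q).trans (hδ q)⟩
      rw [Finset.card_insert_of_notMem hnotmem]
      rw [Nat.mul_succ]
      omega

include hsink hrne hrb hruniq hb ha hak in
/-- The main lower-bound construction: from a reset word `W` of the tail
extension we obtain a reset word of `𝒜` that is shorter by exactly `k·|Q|`. -/
lemma lower_aux (W : List Letter) (hW : IsResetWord (tailExt δ q0 r k hk) W) :
    ∃ W₁ : List Letter, IsResetWord δ W₁ ∧
      W₁.length + k * Fintype.card Q = W.length := by
  classical
  -- every state ends at the tail sink `t₀`
  have hall : ∀ x, deltaStar (tailExt δ q0 r k hk) x W = Sum.inr ⟨0, hk⟩ := fun x =>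
    (hW x (Sum.inr ⟨0, hk⟩)).trans (deltaStar_tailExt_t0 _ _ _ _ _ W)
  -- the position of state `q`'s trajectory after `s` letters
  set pos : Q → ℕ → Q ⊕ Fin k := fun q s => deltaStar (tailExt δ q0 r k hk) (Sum.inl q) (W.take s) with hpos
  have hposW : ∀ q, pos q W.length = Sum.inr ⟨0, hk⟩ := by
    intro q; rw [hpos]; simp only [List.take_length]; exact hall _
  have hstep : ∀ q s, s < W.length → ∀ h : s < W.length,
      pos q (s + 1) = (tailExt δ q0 r k hk) (pos q s) W[s] :=
    fun q s hs h => deltaStar_take_succ (tailExt δ q0 r k hk) (Sum.inl q) W s h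
  -- every trajectory visits `inl q0`
  have hvisit : ∀ q : Q, ∃ t, t ≤ W.length ∧ pos q t = Sum.inl q0 := by
    intro q
    obtain ⟨u, v, huv, hu⟩ := cross hk W q ⟨⟨0, hk⟩, hall (Sum.inl q)⟩
    refine ⟨u.length, ?_, ?_⟩
    · rw [huv, List.length_append]; omega
    · rw [hpos]; simp only; rw [huv, List.take_left]; exact hu
  -- the last visit of `q` to `inl q0`
  have hSne : ∀ q : Q, ((Finset.range (W.length + 1)).filter
      fun t => pos q t = Sum.inl q0).Nonempty := by
    intro q
    obtain ⟨t, ht1, ht2⟩ := hvisit q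
    exact ⟨t, Finset.mem_filter.mpr ⟨Finset.mem_range.mpr (by omega), ht2⟩⟩
  obtain ⟨T, hT0, hT1, hTmax⟩ : ∃ T : Q → ℕ, (∀ q, pos q (T q) = Sum.inl q0) ∧
      (∀ q, T q ≤ W.length) ∧
      (∀ q t, t ≤ W.length → pos q t = Sum.inl q0 → t ≤ T q) := by
    refine ⟨fun q => (((Finset.range (W.length + 1)).filter
      fun t => pos q t = Sum.inl q0).max' (hSne q)), ?_, ?_, ?_⟩
    · intro q
      have := Finset.max'_mem _ (hSne q)
      exact (Finset.mem_filter.mp this).2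
    · intro q
      have h1 := Finset.max'_mem _ (hSne q)
      have h2 := Finset.mem_range.mp (Finset.mem_filter.mp h1).1
      exact Nat.lt_succ_iff.mp h2
    · intro q t ht hp
      exact Finset.le_max' _ t (Finset.mem_filter.mpr ⟨Finset.mem_range.mpr (by omega), hp⟩)
  -- if a trajectory is in the `Q`-part at time `s`, then `s ≤ T q`
  have hback : ∀ q s (p' : Q), s ≤ W.length → pos q s = Sum.inl p' → s ≤ T q := by
    intro q s p' hs hp
    have h2 : deltaStar (tailExt δ q0 r k hk) (Sum.inl p') (W.drop s) = Sum.inr ⟨0, hk⟩ := by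
      have h3 : deltaStar (tailExt δ q0 r k hk) (Sum.inl q) (W.take s ++ W.drop s) = Sum.inr ⟨0, hk⟩ := by
        rw [List.take_append_drop]; exact hall _
      rw [deltaStar_append] at h3
      rw [hpos] at hp; simp only at hp
      rw [hp] at h3; exact h3
    obtain ⟨u, v, huv, hu⟩ := cross hk (W.drop s) p' ⟨_, h2⟩
    have hq0 : pos q (s + u.length) = Sum.inl q0 := by
      rw [hpos]; simp only
      rw [deltaStar_take_add]
      rw [hpos] at hp; simp only at hp
      rw [hp, huv, List.take_left]
      exact hu
    have hlen : s + u.length ≤ W.length := by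
      have h4 : (W.drop s).length = W.length - s := List.length_drop
      rw [huv, List.length_append] at h4
      omega
    have := hTmax q _ hlen hq0
    omega
  -- arriving at `inl q0` requires the letter `b`
  have hentry : ∀ (q : Q) s, 1 ≤ s → s ≤ W.length → pos q s = Sum.inl q0 →
      ∀ h : s - 1 < W.length, W[s - 1] = Letter.b := by
    intro q s h1 h2 hp h
    have hs : pos q (s - 1 + 1) = (tailExt δ q0 r k hk) (pos q (s - 1)) W[s - 1] := hstep q (s - 1) h h
    rw [show s - 1 + 1 = s from by omega] at hs
    cases hl : W[s - 1] with
    | a =>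
        exfalso
        rw [hs, hl] at hp
        exact no_a_to_q0 hk hsink ha _ hp
    | b => rfl
  -- trace a tail excursion back to its entry point
  have htb : ∀ (p : Q) s, s ≤ W.length → ∀ i : Fin k, 1 ≤ (i : ℕ) →
      pos p s = Sum.inr i →
      ∃ u, u + (k - (i : ℕ)) = s ∧ pos p u = Sum.inl q0 ∧
        ∀ jj, u ≤ jj → jj < s → ∀ h : jj < W.length, W[jj] = Letter.a := by
    intro p s
    induction s with
    | zero =>
        intro _ i hi hp
        rw [hpos] at hp; simp [deltaStar] at hp
    | succ s ihs =>
        intro hsW i hi hp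
        have hlt : s < W.length := by omega
        have hst : pos p (s + 1) = (tailExt δ q0 r k hk) (pos p s) W[s] := hstep p s hlt hlt
        rw [hst] at hp
        cases hl : W[s] with
        | b =>
            rw [hl] at hp
            obtain ⟨hz, -⟩ := b_to_inr hk hp
            omega
        | a =>
            rw [hl] at hp
            cases hx : pos p s with
            | inl p' =>
                rw [hx, tailExt_inl_a] at hp
                by_cases h0 : p' = q0
                · rw [if_pos h0] at hp
                  have hval : k - 1 = (i : ℕ) := congrArg Fin.val (Sum.inr.inj hp)
                  have hik := i.isLt
                  refine ⟨s, by omega, by rw [hx, h0], ?_⟩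
                  intro jj hj1 hj2 hj3
                  have : jj = s := by omega
                  subst this
                  exact hl
                · rw [if_neg h0] at hp; simp at hp
            | inr i' =>
                rw [hx, tailExt_inr_a] at hp
                have hval : (i' : ℕ) - 1 = (i : ℕ) := congrArg Fin.val (Sum.inr.inj hp)
                have hi' : 1 ≤ (i' : ℕ) := by omega
                obtain ⟨u, hu1, hu2, hu3⟩ := ihs (by omega) i' hi' hx
                have hik' := i'.isLt
                refine ⟨u, by omega, hu2, ?_⟩
                intro jj hj1 hj2 hj3
                by_cases hjs : jj = s
                · subst hjs; exact hl
                · exact hu3 jj hj1 (by omega) hj3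
  -- the final descent of each trajectory
  have hdesc : ∀ (q : Q) j, j ≤ k → T q + j ≤ W.length ∧
      pos q (T q + j) = (if h0 : j = 0 then Sum.inl q0
        else Sum.inr ⟨k - j, by omega⟩) := by
    intro q j
    induction j with
    | zero =>
        intro _
        refine ⟨by have := hT1 q; omega, ?_⟩
        rw [dif_pos rfl]
        exact hT0 q
    | succ j ihj =>
        intro hjk
        obtain ⟨hle, hposj⟩ := ihj (by omega)
        have hlt : T q + j < W.length := by
          rcases Nat.lt_or_ge (T q + j) W.length with h | h
          · exact h
          · exfalso
            have heq : T q + j = W.length := by omega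
            rw [heq, hposW q] at hposj
            by_cases h0 : j = 0
            · rw [dif_pos h0] at hposj; simp at hposj
            · rw [dif_neg h0] at hposj
              have := congrArg Fin.val (Sum.inr.inj hposj)
              simp at this
              omega
        have hst : pos q (T q + j + 1) = (tailExt δ q0 r k hk) (pos q (T q + j)) W[T q + j] :=
          hstep q (T q + j) hlt hlt
        cases hl : W[T q + j] with
        | b =>
            exfalso
            have hposb : pos q (T q + j + 1) = Sum.inl r := by
              rw [hst, hl]
              by_cases h0 : j = 0
              · rw [hposj, dif_pos h0, tailExt_q0_b]
              · rw [hposj, dif_neg h0, tailExt_inr_b]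
                rw [if_neg (show ¬((⟨k - j, by omega⟩ : Fin k) : ℕ) = 0 from by
                  simp; omega)]
            have := hback q (T q + j + 1) r (by omega) hposb
            omega
        | a =>
            refine ⟨by omega, ?_⟩
            rw [dif_neg (by omega : ¬(j + 1 = 0))]
            rw [show T q + (j + 1) = T q + j + 1 from by omega, hst, hl]
            by_cases h0 : j = 0
            · rw [hposj, dif_pos h0, tailExt_q0_a]
              exact congrArg Sum.inr (Fin.ext (by simp [h0]))
            · rw [hposj, dif_neg h0, tailExt_inr_a]
              exact congrArg Sum.inr (Fin.ext (by simp; omega))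
  -- all letters during the final descent are `a`
  have hlet : ∀ (q : Q) jj, T q ≤ jj → jj < T q + k →
      ∀ h : jj < W.length, W[jj] = Letter.a := by
    intro q jj h1 h2 h
    obtain ⟨-, hpj⟩ := hdesc q (jj - T q) (by omega)
    obtain ⟨-, hpj1⟩ := hdesc q (jj - T q + 1) (by omega)
    rw [show T q + (jj - T q) = jj from by omega] at hpj
    rw [show T q + (jj - T q + 1) = jj + 1 from by omega] at hpj1
    have hst : pos q (jj + 1) = (tailExt δ q0 r k hk) (pos q jj) W[jj] := hstep q jj h h
    cases hl : W[jj] with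
    | a => rfl
    | b =>
        exfalso
        rw [hst, hl] at hpj1
        rw [dif_neg (by omega : ¬(jj - T q + 1 = 0))] at hpj1
        obtain ⟨hz, hzx⟩ := b_to_inr hk hpj1
        simp only [Fin.val_mk] at hz
        by_cases h0 : jj - T q = 0
        · rw [dif_pos h0] at hpj
          rw [hpj] at hzx; simp at hzx
        · rw [dif_neg h0] at hpj
          rw [hpj] at hzx
          have := congrArg Fin.val (Sum.inr.inj hzx)
          simp at this
          omega
  -- the last-visit times are pairwise distinct
  have hTinj : Function.Injective T := by
    intro q q' hTqq'
    by_contra hne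
    have hPex : ∃ s, pos q s = pos q' s := ⟨T q, by rw [hT0 q, hTqq', hT0 q']⟩
    set s₀ := Nat.find hPex with hs₀def
    have hs₀P : pos q s₀ = pos q' s₀ := Nat.find_spec hPex
    have hs₀min : ∀ t, t < s₀ → pos q t ≠ pos q' t := fun t ht => Nat.find_min hPex ht
    have hs₀le : s₀ ≤ T q := Nat.find_min' hPex (by rw [hT0 q, hTqq', hT0 q'])
    have hs0pos : 0 < s₀ := by
      rcases Nat.eq_zero_or_pos s₀ with h0 | h0
      · exfalso
        rw [h0] at hs₀P
        rw [hpos] at hs₀P; simp [deltaStar] at hs₀P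
        exact hne hs₀P
      · exact h0
    have hs₀W : s₀ ≤ W.length := le_trans hs₀le (hT1 q)
    have hltW : s₀ - 1 < W.length := by omega
    have hstq : pos q (s₀ - 1 + 1) = (tailExt δ q0 r k hk) (pos q (s₀ - 1)) W[s₀ - 1] :=
      hstep q (s₀ - 1) hltW hltW
    have hstq' : pos q' (s₀ - 1 + 1) = (tailExt δ q0 r k hk) (pos q' (s₀ - 1)) W[s₀ - 1] :=
      hstep q' (s₀ - 1) hltW hltW
    rw [show s₀ - 1 + 1 = s₀ from by omega] at hstq hstq'
    have hxy : pos q (s₀ - 1) ≠ pos q' (s₀ - 1) := hs₀min _ (by omega)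
    have hcoll := collision hk hsink hrne hrb hruniq hb ha hxy
      (show (tailExt δ q0 r k hk) (pos q (s₀ - 1)) W[s₀ - 1] = (tailExt δ q0 r k hk) (pos q' (s₀ - 1)) W[s₀ - 1] from by
        rw [← hstq, ← hstq', hs₀P])
    rcases hcoll with hc | ⟨-, -, hx, hy⟩
    · -- the trajectories merged at `t₀` before time `T q`: impossible
      have h1 : pos q (T q) = Sum.inr ⟨0, hk⟩ := by
        have h2 : T q = s₀ + (T q - s₀) := by omega
        rw [hpos]; simp only
        rw [h2, deltaStar_take_add]
        have h3 : deltaStar (tailExt δ q0 r k hk) (Sum.inl q) (W.take s₀) = Sum.inr ⟨0, hk⟩ := by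
          rw [show deltaStar (tailExt δ q0 r k hk) (Sum.inl q) (W.take s₀) = pos q s₀ from rfl, hstq, hc]
        rw [h3, deltaStar_tailExt_t0]
      rw [hT0 q] at h1; simp at h1
    · -- the collision is at `inl r` via `b`: impossible
      have helper : ∀ p1 p2 : Q, (∀ t, t < s₀ → pos p1 t ≠ pos p2 t) →
          (∃ i : Fin k, 1 ≤ (i : ℕ) ∧ pos p1 (s₀ - 1) = Sum.inr i) →
          (pos p2 (s₀ - 1) = Sum.inl q0 ∨
            ∃ i : Fin k, 1 ≤ (i : ℕ) ∧ pos p2 (s₀ - 1) = Sum.inr i) → False := by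
        rintro p1 p2 hmin ⟨i, hi1, hi2⟩ hy2
        obtain ⟨u, hu1, hu2, hu3⟩ := htb p1 (s₀ - 1) (by omega) i hi1 hi2
        have hik := i.isLt
        rcases hy2 with hq0' | ⟨i', hi'1, hi'2⟩
        · by_cases hus : u = s₀ - 1
          · exact hmin u (by omega) (by rw [hu2, hus, hq0'])
          · have hu_lt : u < s₀ - 1 := by omega
            have hb2 := hentry p2 (s₀ - 1) (by omega) (by omega) hq0' (by omega)
            have ha2 := hu3 (s₀ - 1 - 1) (by omega) (by omega) (by omega)
            rw [hb2] at ha2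
            exact Letter.noConfusion ha2
        · obtain ⟨u', hu'1, hu'2, hu'3⟩ := htb p2 (s₀ - 1) (by omega) i' hi'1 hi'2
          have hik' := i'.isLt
          have hne_u : u ≠ u' := by
            intro he
            exact hmin u (by omega) (by rw [hu2, he, hu'2])
          rcases Nat.lt_or_ge u u' with hlt' | hge
          · have hb2 := hentry p2 u' (by omega) (by omega) hu'2 (by omega)
            have ha2 := hu3 (u' - 1) (by omega) (by omega) (by omega)
            rw [hb2] at ha2
            exact Letter.noConfusion ha2
          · have hlt'' : u' < u := by omega
            have hb1 := hentry p1 u (by omega) (by omega) hu2 (by omega)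
            have ha1 := hu'3 (u - 1) (by omega) (by omega) (by omega)
            rw [hb1] at ha1
            exact Letter.noConfusion ha1
      rcases hx with hxq0 | hxinr
      · rcases hy with hyq0 | hyinr
        · exact hxy (hxq0.trans hyq0.symm)
        · exact helper q' q (fun t ht hc => hs₀min t ht hc.symm) hyinr (Or.inl hxq0)
      · exact helper q q' hs₀min hxinr hy
  -- the descent intervals are pairwise disjoint
  have hdisjT : ∀ q q' : Q, T q < T q' → T q + k ≤ T q' := by
    intro q q' hlt
    by_contra hc
    push_neg at hc
    have hb1 := hentry q' (T q') (by omega) (hT1 q') (hT0 q')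
      (by have := hT1 q'; omega)
    have ha1 := hlet q (T q' - 1) (by omega) (by omega) (by have := hT1 q'; omega)
    rw [hb1] at ha1
    exact Letter.noConfusion ha1
  -- remove the `|Q|` disjoint blocks of `a`'s
  have hblocks : ∀ t ∈ Finset.univ.image T, t + k ≤ W.length ∧
      ∀ j, (hj : j < k) → ∀ h : t + j < W.length, W[t + j] = Letter.a := by
    intro t ht
    obtain ⟨q, -, rfl⟩ := Finset.mem_image.mp ht
    refine ⟨(hdesc q k le_rfl).1, ?_⟩
    intro j hj h
    exact hlet q (T q + j) (by omega) (by omega) h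
  have hdisjblocks : ∀ t ∈ Finset.univ.image T, ∀ t' ∈ Finset.univ.image T,
      t ≠ t' → t + k ≤ t' ∨ t' + k ≤ t := by
    intro t ht t' ht' hne
    obtain ⟨q, -, rfl⟩ := Finset.mem_image.mp ht
    obtain ⟨q', -, rfl⟩ := Finset.mem_image.mp ht'
    rcases lt_trichotomy (T q) (T q') with h | h | h
    · exact Or.inl (hdisjT q q' h)
    · exact absurd h hne
    · exact Or.inr (hdisjT q' q h)
  obtain ⟨W₁, hlen₁, hδ₁⟩ := removeBlocks hak (Finset.univ.image T) W hblocks hdisjblocks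
  have hWreset : ∀ p : Q, deltaStar δ p W = q0 := by
    intro p
    have h1 : deltaStar δ p (W.take (T p)) = q0 := proj_to_q0 hk hsink (hT0 p)
    conv_lhs => rw [← List.take_append_drop (T p) W]
    rw [deltaStar_append, h1, deltaStar_sink hsink]
  refine ⟨W₁, ?_, ?_⟩
  · intro p p'
    rw [hδ₁ p, hδ₁ p', hWreset p, hWreset p']
  · rw [Finset.card_image_of_injective _ hTinj, Finset.card_univ] at hlen₁
    exact hlen₁

end Lower

/-- Vorel's lemma: appending a tail of length `k` (a positive multiple of the
order of `a`) at the pre-sink state `r` of an `n`-state synchronizing almost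
permutation automaton increases the reset threshold by exactly `n * k`. -/
theorem resetThreshold_tailExt
    {Q : Type*} [Fintype Q] [DecidableEq Q]
    (δ : Q → Letter → Q) (q0 r : Q) (n : ℕ)
    -- `𝒜` has `n` states
    (hn : Fintype.card Q = n)
    -- `q0` is a sink state
    (hsink : ∀ ℓ : Letter, δ q0 ℓ = q0)
    -- `𝒜` is synchronizing
    (hsync : ∃ w : List Letter, IsResetWord δ w)
    -- `r` is the unique state of `Q \ {q0}` with `δ(r, b) = q0` (the pre-sink state)
    (hrne : r ≠ q0)
    (hrb : δ r Letter.b = q0)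
    (hruniq : ∀ s : Q, s ≠ q0 → δ s Letter.b = q0 → s = r)
    -- the letter `b` acts as a permutation on `Q \ {r}`
    (hb : Set.BijOn (fun s => δ s Letter.b) {r}ᶜ {r}ᶜ)
    -- the letter `a` acts as a permutation on `Q`
    (ha : Function.Bijective fun s => δ s Letter.a)
    -- `ord` is the order of the letter `a`: the least `j ≥ 1` such that `a^j` acts as the identity
    (ord : ℕ) (hord : 0 < ord)
    (hordid : ∀ q : Q, deltaStar δ q (List.replicate ord Letter.a) = q)
    (hordleast : ∀ j : ℕ, 0 < j →
      (∀ q : Q, deltaStar δ q (List.replicate j Letter.a) = q) → ord ≤ j)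
    -- `k` is a positive multiple of the order of `a`
    (k m : ℕ) (hm : 0 < m) (hkm : k = m * ord) (hk : 0 < k) :
    resetThreshold (tailExt δ q0 r k hk) = resetThreshold δ + n * k := by
  classical
  unfold resetThreshold
  have hakid : ∀ q : Q, deltaStar δ q (List.replicate k Letter.a) = q := by
    intro q
    rw [hkm]
    exact deltaStar_replicate_mul hordid m q
  have hAset : {l : ℕ | ∃ w : List Letter, IsResetWord δ w ∧ w.length = l}.Nonempty := by
    obtain ⟨w, hw⟩ := hsync
    exact ⟨w.length, w, hw, rfl⟩
  obtain ⟨w0, hw0, hw0len⟩ := Nat.sInf_mem hAset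
  obtain ⟨W0, hW0, hW0len⟩ := exists_reset_tailExt r hk hsink ha hakid hw0
  have hEset : {l : ℕ | ∃ W : List Letter,
      IsResetWord (tailExt δ q0 r k hk) W ∧ W.length = l}.Nonempty :=
    ⟨W0.length, W0, hW0, rfl⟩
  apply le_antisymm
  · have h1 : sInf {l : ℕ | ∃ w : List Letter,
        IsResetWord (tailExt δ q0 r k hk) w ∧ w.length = l} ≤ W0.length :=
      Nat.sInf_le ⟨W0, hW0, rfl⟩
    have h2 : W0.length ≤ w0.length + k * Fintype.card Q := hW0len
    rw [hw0len, hn] at h2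
    rw [Nat.mul_comm n k]
    omega
  · refine le_csInf hEset ?_
    rintro L ⟨W, hWr, rfl⟩
    obtain ⟨W₁, hW₁, hlen⟩ := lower_aux hk hsink hrne hrb hruniq hb ha hakid W hWr
    have h3 : sInf {l : ℕ | ∃ w : List Letter, IsResetWord δ w ∧ w.length = l} ≤
        W₁.length := Nat.sInf_le ⟨W₁, hW₁, rfl⟩
    rw [← hn, Nat.mul_comm (Fintype.card Q) k]
    omega
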